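/- Let d, d₁ ≥ 1, let u : ℝ^d → ℝ^{d₁} be twice continuously differentiable, and fix x ∈ ℝ^d, h ∈ ℝ^{d₁}, a vector a ∈ ℝ^d, matrices A ∈ ℝ^{d×d} and c ∈ ℝ^{d₁×d₁}, and an array C = (C_{mlk}) ∈ ℝ^{d₁×d₁×d}. Define Φ(x,h) = ⟨h, u(x)⟩, the enlarged drift q(x,h) = (a, c h) ∈ ℝ^{d+d₁}, and the enlarged diffusion Q(x,h) : ℝ^d → ℝ^{d+d₁} by Q(x,h)w = (A w, C(h,w)), where C(h,w)_m = Σ_{l,k} C_{mlk} h_l w_k. Then ½ Tr(Q(x,h)ᵀ D²Φ(x,h) Q(x,h)) + ⟨q(x,h), ∇Φ(x,h)⟩ = Σ_{l=1}^{d₁} h_l v_l(x), where v_l(x) = ½ Tr(Aᵀ ∇²u_l(x) A) + ⟨a, ∇u_l(x)⟩ + Σ_{m=1}^{d₁} Σ_{j=1}^{d} B^j_{lm} ∂_j u_m(x) + Σ_{m=1}^{d₁} c_{ml} u_m(x), with B^j_{lm} := Σ_{k=1}^{d} C_{mlk} A_{jk}, and D²Φ denotes the full Hessian of Φ on ℝ^{d+d₁}.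 -/

import Mathlib

/-!
Since `Φ(x, h) = ∑ₘ hₘ uₘ(x)` is linear in `h`, its second derivative in a direction `(v, w)` is
`2 ∑ₘ wₘ Duₘ(x) v + ∑ₘ hₘ D²uₘ(x)(v, v)`. For the `k`-th column of `Q` we have `v = A eₖ` and
`w = C(h, eₖ)`; expanding `Duₘ(x)(A eₖ) = ∑ⱼ A_{jk} ∂ⱼuₘ(x)` and exchanging the finite sums turns
the mixed terms into `∑ₗ hₗ ∑ₘ ∑ⱼ B^j_{lm} ∂ⱼuₘ(x)`, while the `h`-component `ch` of the drift
contributes the coupling `∑ₗ hₗ ∑ₘ c_{ml} uₘ(x)`.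
-/

/-- `Φ(x,h) = ⟨h, u(x)⟩` on the enlarged phase space `ℝ^d × ℝ^{d₁}`. -/
noncomputable def enlargedPairing {d d₁ : ℕ} (u : (Fin d → ℝ) → (Fin d₁ → ℝ)) :
    (Fin d → ℝ) × (Fin d₁ → ℝ) → ℝ := fun p => ∑ m, p.2 m * u p.1 m

theorem ContinuousLinearMap.apply_eq_sum_mul_single {ι : Type*} [Fintype ι] [DecidableEq ι]
    (L : (ι → ℝ) →L[ℝ] ℝ) (v : ι → ℝ) :
    L v = ∑ j, v j * L (Pi.single j 1) := by
  conv_lhs => rw [pi_eq_sum_univ' v]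
  simp only [map_sum, map_smul, smul_eq_mul]

theorem fderiv_sum_mul_apply {F ι : Type*} [NormedAddCommGroup F] [NormedSpace ℝ F] [Fintype ι]
    {f g : F → ι → ℝ} {p : F}
    (hf : ∀ m, DifferentiableAt ℝ (fun q => f q m) p)
    (hg : ∀ m, DifferentiableAt ℝ (fun q => g q m) p) (v : F) :
    fderiv ℝ (fun q => ∑ m, f q m * g q m) p v
      = ∑ m, (fderiv ℝ (fun q => f q m) p v * g p m + f p m * fderiv ℝ (fun q => g q m) p v) := by
  rw [fderiv_fun_sum (A := fun m q => f q m * g q m) fun m _ => (hf m).mul (hg m), sum_apply]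
  refine Finset.sum_congr rfl fun m _ => ?_
  rw [fderiv_fun_mul (hf m) (hg m), add_apply, smul_apply, smul_apply, smul_eq_mul, smul_eq_mul]
  ring

section Pairing

variable {E ι : Type*} [NormedAddCommGroup E] [NormedSpace ℝ E]

theorem fderiv_comp_fst_apply {F : Type*} [NormedAddCommGroup F] [NormedSpace ℝ F]
    {g : E → ℝ} {x : E} (hg : DifferentiableAt ℝ g x) (y : F) (v : E) (w : F) :
    fderiv ℝ (fun p : E × F => g p.1) (x, y) (v, w) = fderiv ℝ g x v := by
  have hd : HasFDerivAt (fun p : E × F => g p.1)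
      ((fderiv ℝ g x).comp (ContinuousLinearMap.fst ℝ E F)) (x, y) :=
    hg.hasFDerivAt.comp (x, y) hasFDerivAt_fst
  rw [hd.fderiv]
  rfl

theorem fderiv_snd_apply (x : E) (h : ι → ℝ) (m : ι) (v : E) (w : ι → ℝ) :
    fderiv ℝ (fun p : E × (ι → ℝ) => p.2 m) (x, h) (v, w) = w m := by
  have hd : HasFDerivAt (fun p : E × (ι → ℝ) => p.2 m)
      ((ContinuousLinearMap.proj m).comp (ContinuousLinearMap.snd ℝ E (ι → ℝ))) (x, h) :=
    ((ContinuousLinearMap.proj m).comp (ContinuousLinearMap.snd ℝ E (ι → ℝ))).hasFDerivAt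
  rw [hd.fderiv]
  rfl

variable [Fintype ι]

theorem fderiv_pairing_apply {u : E → ι → ℝ} {x : E}
    (hu : ∀ m, DifferentiableAt ℝ (fun y => u y m) x) (h : ι → ℝ) (v : E) (w : ι → ℝ) :
    fderiv ℝ (fun p : E × (ι → ℝ) => ∑ m, p.2 m * u p.1 m) (x, h) (v, w)
      = ∑ m, (w m * u x m + h m * fderiv ℝ (fun y => u y m) x v) := by
  have hu₁ (m : ι) : DifferentiableAt ℝ (fun p : E × (ι → ℝ) => u p.1 m) (x, h) :=
    (hu m).comp (f := Prod.fst) (x, h) differentiableAt_fst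
  rw [fderiv_sum_mul_apply (fun m => by fun_prop) hu₁]
  simp only [fderiv_snd_apply, fderiv_comp_fst_apply (hu _)]

theorem fderiv_fderiv_pairing_apply {u : E → ι → ℝ} {x v : E}
    (hu : ∀ m, Differentiable ℝ (fun y => u y m))
    (hu' : ∀ m, DifferentiableAt ℝ (fun y => fderiv ℝ (fun y' => u y' m) y v) x)
    (h w : ι → ℝ) :
    fderiv ℝ (fun p : E × (ι → ℝ) =>
        fderiv ℝ (fun p : E × (ι → ℝ) => ∑ m, p.2 m * u p.1 m) p (v, w)) (x, h) (v, w)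
      = ∑ m, (2 * (w m * fderiv ℝ (fun y => u y m) x v)
          + h m * fderiv ℝ (fun y => fderiv ℝ (fun y' => u y' m) y v) x v) := by
  have hfirst : (fun p : E × (ι → ℝ) =>
        fderiv ℝ (fun p : E × (ι → ℝ) => ∑ m, p.2 m * u p.1 m) p (v, w))
      = fun p => ∑ m, w m * u p.1 m + ∑ m, p.2 m * fderiv ℝ (fun y => u y m) p.1 v := by
    funext p
    rw [fderiv_pairing_apply (fun m => hu m p.1), Finset.sum_add_distrib]
  have hu₁ (m : ι) : DifferentiableAt ℝ (fun p : E × (ι → ℝ) => u p.1 m) (x, h) :=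
    (hu m _).comp (f := Prod.fst) (x, h) differentiableAt_fst
  have hu₂ (m : ι) :
      DifferentiableAt ℝ (fun p : E × (ι → ℝ) => fderiv ℝ (fun y => u y m) p.1 v) (x, h) :=
    (hu' m).comp (f := Prod.fst) (x, h) differentiableAt_fst
  rw [hfirst, fderiv_fun_add (by fun_prop) (by fun_prop), add_apply, fderiv_pairing_apply hu',
    fderiv_sum_mul_apply (f := fun _ => w) (fun _ => by fun_prop) hu₁, ← Finset.sum_add_distrib]
  refine Finset.sum_congr rfl fun m _ => ?_
  rw [fderiv_fun_const, Pi.zero_apply, zero_apply, fderiv_comp_fst_apply (hu m x)]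
  ring

end Pairing

section Rearrangement

variable {ι κ : Type*} [Fintype ι] [Fintype κ]

theorem sum_sum_mul_sum_contract (h : ι → ℝ) (C : ι → ι → κ → ℝ) (A : κ → κ → ℝ)
    (D : ι → κ → ℝ) :
    ∑ k, ∑ m, (∑ l, C m l k * h l) * ∑ j, A j k * D m j
      = ∑ l, h l * ∑ m, ∑ j, (∑ k, C m l k * A j k) * D m j :=
  calc _ = ∑ k, ∑ m, ∑ l, h l * (C m l k * ∑ j, A j k * D m j) := by
          simp only [Finset.sum_mul, mul_comm (C _ _ _), mul_assoc]
    _ = ∑ l, h l * ∑ m, ∑ k, C m l k * ∑ j, A j k * D m j := by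
          rw [Finset.sum_comm_cycle]
          refine Finset.sum_congr rfl fun l _ => ?_
          rw [Finset.sum_comm, Finset.mul_sum]
          simp only [Finset.mul_sum]
    _ = _ := by
          refine Finset.sum_congr rfl fun l _ => congrArg _ (Finset.sum_congr rfl fun m _ => ?_)
          simp only [Finset.mul_sum, Finset.sum_mul]
          rw [Finset.sum_comm]
          exact Finset.sum_congr rfl fun _ _ => Finset.sum_congr rfl fun _ _ => by ring

theorem sum_sum_mul_eq_sum_mul_sum (c : ι → ι → ℝ) (h U : ι → ℝ) :
    ∑ m, (∑ l, c m l * h l) * U m = ∑ l, h l * ∑ m, c m l * U m := by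
  simp only [Finset.sum_mul, Finset.mul_sum]
  rw [Finset.sum_comm]
  exact Finset.sum_congr rfl fun _ _ => Finset.sum_congr rfl fun _ _ => by ring

theorem generator_sum_rearrange (h U Da : ι → ℝ) (A : κ → κ → ℝ) (c : ι → ι → ℝ)
    (C : ι → ι → κ → ℝ) (D G : ι → κ → ℝ) :
    1 / 2 * ∑ k, ∑ m, (2 * ((∑ l, C m l k * h l) * ∑ j, A j k * D m j) + h m * G m k)
        + ∑ m, ((∑ l, c m l * h l) * U m + h m * Da m)
      = ∑ l, h l * (1 / 2 * ∑ k, G l k + Da l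
          + ∑ m, ∑ j, (∑ k, C m l k * A j k) * D m j + ∑ m, c m l * U m) := by
  simp only [Finset.sum_add_distrib, ← Finset.mul_sum]
  rw [sum_sum_mul_sum_contract, sum_sum_mul_eq_sum_mul_sum,
    Finset.sum_comm (f := fun k m => h m * G m k)]
  simp only [← Finset.mul_sum, mul_add, Finset.sum_add_distrib, mul_left_comm (h _) (1 / 2)]
  ring

end Rearrangement

theorem enlarged_generator_identity_general
    (d d₁ : ℕ)
    (u : (Fin d → ℝ) → (Fin d₁ → ℝ)) (hu : ContDiff ℝ 2 u)
    (x : Fin d → ℝ) (h : Fin d₁ → ℝ)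
    (a : Fin d → ℝ) (A : Matrix (Fin d) (Fin d) ℝ)
    (c : Matrix (Fin d₁) (Fin d₁) ℝ) (C : Fin d₁ → Fin d₁ → Fin d → ℝ) :
    (1 / 2) * (∑ k : Fin d,
        fderiv ℝ (fun p => fderiv ℝ (enlargedPairing u) p
            ((fun j => A j k), (fun m => ∑ l, C m l k * h l))) (x, h)
          ((fun j => A j k), (fun m => ∑ l, C m l k * h l)))
      + fderiv ℝ (enlargedPairing u) (x, h) (a, fun m => ∑ l, c m l * h l)
    = ∑ l, h l *
        ((1 / 2) * (∑ k : Fin d,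
            fderiv ℝ (fun y => fderiv ℝ (fun y' => u y' l) y (fun j => A j k)) x
              (fun j => A j k))
          + fderiv ℝ (fun y => u y l) x a
          + (∑ m, ∑ j, (∑ k, C m l k * A j k) *
              fderiv ℝ (fun y => u y m) x (Pi.single j 1))
          + ∑ m, c m l * u x m) := by
  have hu₁ (m : Fin d₁) : ContDiff ℝ 2 (fun y => u y m) := contDiff_pi.mp hu m
  have hdiff (m : Fin d₁) : Differentiable ℝ (fun y => u y m) :=
    (hu₁ m).differentiable (by norm_num)
  have hdiff₂ (m : Fin d₁) (v : Fin d → ℝ) :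
      Differentiable ℝ (fun y => fderiv ℝ (fun y' => u y' m) y v) :=
    (((hu₁ m).fderiv_right (m := 1) (by norm_num)).clm_apply contDiff_const).differentiable
      (by norm_num)
  unfold enlargedPairing
  simp only [fderiv_fderiv_pairing_apply hdiff (fun m => hdiff₂ m _ x),
    fderiv_pairing_apply (fun m => hdiff m x),
    (fderiv ℝ (fun y => u y _) x).apply_eq_sum_mul_single (fun j => A j _)]
  exact generator_sum_rearrange h (u x) _ A c C
    (fun m j => fderiv ℝ (fun y => u y m) x (Pi.single j 1)) _

/-- The key computation matching the generator of the system (1.1), including the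
nondiagonal first-order terms `B^j_{lm} ∂_j u_m` with `B^j_{lm} = Σ_k C_{mlk} A_{jk}`
and the zero-order coupling `c u`, with the scalar second-order operator
`½ Tr(Qᵀ D²Φ Q) + ⟨q, ∇Φ⟩` in the enlarged phase space, where the `k`-th column of
`Q(x,h)` is `(A·e_k, C(h, e_k))` and `q(x,h) = (a, ch)`. -/
theorem enlarged_generator_identity
    (d d₁ : ℕ) (hd : 1 ≤ d) (hd₁ : 1 ≤ d₁)
    (u : (Fin d → ℝ) → (Fin d₁ → ℝ)) (hu : ContDiff ℝ 2 u)
    (x : Fin d → ℝ) (h : Fin d₁ → ℝ)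
    (a : Fin d → ℝ) (A : Matrix (Fin d) (Fin d) ℝ)
    (c : Matrix (Fin d₁) (Fin d₁) ℝ) (C : Fin d₁ → Fin d₁ → Fin d → ℝ) :
    (1 / 2) * (∑ k : Fin d,
        fderiv ℝ (fun p => fderiv ℝ (enlargedPairing u) p
            ((fun j => A j k), (fun m => ∑ l, C m l k * h l))) (x, h)
          ((fun j => A j k), (fun m => ∑ l, C m l k * h l)))
      + fderiv ℝ (enlargedPairing u) (x, h) (a, fun m => ∑ l, c m l * h l)
    = ∑ l, h l *
        ((1 / 2) * (∑ k : Fin d,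
            fderiv ℝ (fun y => fderiv ℝ (fun y' => u y' l) y (fun j => A j k)) x
              (fun j => A j k))
          + fderiv ℝ (fun y => u y l) x a
          + (∑ m, ∑ j, (∑ k, C m l k * A j k) *
              fderiv ℝ (fun y => u y m) x (Pi.single j 1))
          + ∑ m, c m l * u x m) :=
  enlarged_generator_identity_general d d₁ u hu x h a A c C
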